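/- Let a, b ∈ ℝ³ with (a₁, a₂) ≠ (b₁, b₂), let c = c_{a,b} and r = r_{a,b}, and let e ∈ ℝ³ with e₃ > 0, e ≠ a, e ≠ b. Then (there exists t ∈ T with ‖t − e‖ < min(‖t − a‖, ‖t − b‖)) if and only if (‖e − c‖ < r, or there is no β ∈ [0, 1] with (e₁, e₂) = β(a₁, a₂) + (1 − β)(b₁, b₂)). (Theorem 1: the evader winning subspace of the two-active-pursuer game is the complement in the play half-space of the barrier and pursuer winning subspace.) -/

import Mathlib

/-! For `t` in the target plane, `‖t - p‖ ^ 2 = ‖t - p̄‖ ^ 2 + p₃ ^ 2`, so the game lives in the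
plane, with the heights of the players entering only as additive weights. If `ē = s ā + (1 - s) b̄`
with `s ∈ [0, 1]`, then `s ‖t - a‖ ^ 2 + (1 - s) ‖t - b‖ ^ 2 - ‖t - e‖ ^ 2` does not depend on `t`;
at `t = c` it equals `‖c - a‖ ^ 2 - ‖c - e‖ ^ 2`, and at a winning `t` it is positive.
Conversely `t = c` wins when `‖e - c‖ < ‖a - c‖`, and when `ē` is off the segment `[ā, b̄]`, a
direction `w` strictly separating `ē` from the segment gives winning points `ē + μ w` for large `μ`.
-/

noncomputable section

/-- The point of `ℝ³` with the given three coordinates. -/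
def mk3 (x y z : ℝ) : EuclideanSpace ℝ (Fin 3) :=
  (WithLp.equiv 2 (Fin 3 → ℝ)).symm ![x, y, z]

/-- The projection of a point onto the target plane `T = {z | z₃ = 0}`. -/
def projT (p : EuclideanSpace ℝ (Fin 3)) : EuclideanSpace ℝ (Fin 3) :=
  mk3 (p 0) (p 1) 0

open Set Filter RealInnerProductSpace

section
variable {V : Type*} [NormedAddCommGroup V] [InnerProductSpace ℝ V]

theorem norm_sub_sq_eq_norm_sub_sq_add_inner (x y p : V) :
    ‖x - p‖ ^ 2 = ‖x - y‖ ^ 2 + 2 * ⟪x - y, y - p⟫ + ‖y - p‖ ^ 2 := by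
  rw [← norm_add_sq_real, sub_add_sub_cancel]

theorem mul_norm_sub_sq_add_mul_norm_sub_sq {s t : ℝ} (hst : s + t = 1) (x a b : V) :
    s * ‖x - a‖ ^ 2 + t * ‖x - b‖ ^ 2 =
      ‖x - (s • a + t • b)‖ ^ 2 + s * ‖s • a + t • b - a‖ ^ 2 + t * ‖s • a + t • b - b‖ ^ 2 := by
  set e := s • a + t • b
  have hcomb : s • (e - a) + t • (e - b) = 0 := by
    rw [smul_sub, smul_sub, sub_add_sub_comm, ← add_smul, hst, one_smul, sub_self]
  have hinner := congrArg (⟪x - e, ·⟫) hcomb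
  simp only [inner_add_right, inner_smul_right, inner_zero_right] at hinner
  rw [norm_sub_sq_eq_norm_sub_sq_add_inner x e a, norm_sub_sq_eq_norm_sub_sq_add_inner x e b]
  linear_combination 2 * hinner + ‖x - e‖ ^ 2 * hst

theorem exists_forall_inner_sub_pos_of_notMem {K : Set V} (hne : K.Nonempty) (hK : IsComplete K)
    (hconv : Convex ℝ K) {e : V} (he : e ∉ K) : ∃ w, ∀ z ∈ K, 0 < ⟪w, e - z⟫ := by
  obtain ⟨v, hv, hmin⟩ := exists_norm_eq_iInf_of_complete_convex hne hK hconv e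
  have hobtuse := (norm_eq_iInf_iff_real_inner_le_zero hconv hv).1 hmin
  refine ⟨e - v, fun z hz => ?_⟩
  have hev : 0 < ‖e - v‖ := norm_pos_iff.2 (sub_ne_zero.2 fun h => he (h ▸ hv))
  calc 0 < ‖e - v‖ ^ 2 - ⟪e - v, z - v⟫ := by nlinarith [hobtuse z hz]
    _ = ⟪e - v, e - z⟫ := by
      rw [← real_inner_self_eq_norm_sq, ← inner_sub_right]; congr 1; abel

theorem isComplete_segment (a b : V) : IsComplete (segment ℝ a b) := by
  rw [← convexHull_pair]
  exact ((toFinite _).isCompact_convexHull ℝ).isComplete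

theorem eventually_norm_sub_sq_add_lt {w e p : V} (hw : 0 < ⟪w, e - p⟫) (C : ℝ) :
    ∀ᶠ μ : ℝ in atTop, ‖e + μ • w - e‖ ^ 2 + C < ‖e + μ • w - p‖ ^ 2 := by
  have hslope : 0 < 2 * ⟪w, e - p⟫ := by positivity
  filter_upwards [(tendsto_id.atTop_mul_const hslope).eventually_gt_atTop (C - ‖e - p‖ ^ 2)]
    with μ hμ
  rw [norm_sub_sq_eq_norm_sub_sq_add_inner _ e p, add_sub_cancel_left, real_inner_smul_left]
  simp only [id] at hμ
  linarith

/-- For `P ≥ 0`, `‖x - p‖ ^ 2 + P` is the squared distance from `x` to a point at height `√P`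
above `p`. -/
theorem exists_norm_sub_sq_add_lt_and_lt_iff {a b c e : V} {A B E : ℝ}
    (hc : ‖c - a‖ ^ 2 + A = ‖c - b‖ ^ 2 + B) :
    (∃ x, ‖x - e‖ ^ 2 + E < ‖x - a‖ ^ 2 + A ∧ ‖x - e‖ ^ 2 + E < ‖x - b‖ ^ 2 + B) ↔
      ‖c - e‖ ^ 2 + E < ‖c - a‖ ^ 2 + A ∨ e ∉ segment ℝ a b := by
  constructor
  · rintro ⟨x, hxa, hxb⟩
    rw [or_iff_not_imp_right, not_not]
    rintro ⟨s, t, hs, ht, hst, rfl⟩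
    have hmix := convex_Ioi _ (mem_Ioi.2 hxa) (mem_Ioi.2 hxb) hs ht hst
    simp only [smul_eq_mul, mem_Ioi] at hmix
    -- `s * ‖y - a‖ ^ 2 + t * ‖y - b‖ ^ 2 - ‖y - e‖ ^ 2` takes the same value at `y = x` and `y = c`
    have hx := mul_norm_sub_sq_add_mul_norm_sub_sq hst x a b
    have hc' := mul_norm_sub_sq_add_mul_norm_sub_sq hst c a b
    linear_combination hmix + hx - hc' - t * hc + (‖c - a‖ ^ 2 + A) * hst
  · rintro (hce | hseg)
    · exact ⟨c, hce, hc ▸ hce⟩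
    · obtain ⟨w, hw⟩ := exists_forall_inner_sub_pos_of_notMem ⟨a, left_mem_segment ℝ a b⟩
        (isComplete_segment a b) (convex_segment a b) hseg
      have hfar (p : V) (hp : p ∈ segment ℝ a b) (P : ℝ) :
          ∀ᶠ μ : ℝ in atTop, ‖e + μ • w - e‖ ^ 2 + E < ‖e + μ • w - p‖ ^ 2 + P := by
        filter_upwards [eventually_norm_sub_sq_add_lt (hw p hp) (E - P)] with μ hμ
        linarith
      obtain ⟨μ, hμa, hμb⟩ :=
        ((hfar a (left_mem_segment ℝ a b) A).and (hfar b (right_mem_segment ℝ a b) B)).exists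
      exact ⟨e + μ • w, hμa, hμb⟩

end

local notation "ℝ³" => EuclideanSpace ℝ (Fin 3)

def targetPlane : Submodule ℝ (ℝ³) where
  carrier := {t | t 2 = 0}
  add_mem' ha hb := by simp_all
  zero_mem' := rfl
  smul_mem' _ _ ht := by simp_all

@[simp] theorem projT_apply_zero (p : ℝ³) : projT p 0 = p 0 := rfl
@[simp] theorem projT_apply_one (p : ℝ³) : projT p 1 = p 1 := rfl
@[simp] theorem projT_apply_two (p : ℝ³) : projT p 2 = 0 := rfl

def toTargetPlane (p : ℝ³) : targetPlane := ⟨projT p, projT_apply_two p⟩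

theorem norm_coe_sub_sq (t : targetPlane) (p : ℝ³) :
    ‖(t : ℝ³) - p‖ ^ 2 = ‖t - toTargetPlane p‖ ^ 2 + p 2 ^ 2 := by
  have ht : (t : ℝ³) 2 = 0 := t.2
  rw [Submodule.coe_norm, Submodule.coe_sub]
  simp only [EuclideanSpace.norm_sq_eq, Fin.sum_univ_three, PiLp.sub_apply, toTargetPlane,
    projT_apply_zero, projT_apply_one, projT_apply_two, ht, Real.norm_eq_abs, sq_abs]
  ring

theorem norm_coe_sub_lt_norm_coe_sub_iff (t : targetPlane) (p q : ℝ³) :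
    ‖(t : ℝ³) - p‖ < ‖(t : ℝ³) - q‖ ↔
      ‖t - toTargetPlane p‖ ^ 2 + p 2 ^ 2 < ‖t - toTargetPlane q‖ ^ 2 + q 2 ^ 2 := by
  rw [← norm_coe_sub_sq, ← norm_coe_sub_sq, sq_lt_sq₀ (norm_nonneg _) (norm_nonneg _)]

theorem toTargetPlane_mem_segment_iff (a b e : ℝ³) :
    toTargetPlane e ∈ segment ℝ (toTargetPlane a) (toTargetPlane b) ↔ ∃ β : ℝ, 0 ≤ β ∧ β ≤ 1 ∧
        e 0 = β * a 0 + (1 - β) * b 0 ∧ e 1 = β * a 1 + (1 - β) * b 1 := by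
  constructor
  · rintro ⟨β, t, hβ, ht, hsum, h⟩
    obtain rfl : t = 1 - β := by linarith
    have hcoord (i : Fin 3) : projT e i = β * projT a i + (1 - β) * projT b i :=
      congrArg (fun z : targetPlane => (z : ℝ³) i) h.symm
    exact ⟨β, hβ, by linarith, hcoord 0, hcoord 1⟩
  · rintro ⟨β, hβ₀, hβ₁, he₀, he₁⟩
    refine ⟨β, 1 - β, hβ₀, by linarith, by ring, ?_⟩
    ext i
    fin_cases i <;> simp [toTargetPlane, he₀, he₁]

theorem two_pursuer_evader_winning_general (a b c e : EuclideanSpace ℝ (Fin 3))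
    (hcT : c 2 = 0)
    (hceq : ‖c - a‖ = ‖c - b‖) :
    (∃ t : EuclideanSpace ℝ (Fin 3), t 2 = 0 ∧ ‖t - e‖ < min ‖t - a‖ ‖t - b‖) ↔
    (‖e - c‖ < ‖a - c‖ ∨
      ¬∃ β : ℝ, 0 ≤ β ∧ β ≤ 1 ∧
        e 0 = β * a 0 + (1 - β) * b 0 ∧ e 1 = β * a 1 + (1 - β) * b 1) := by
  set c' : targetPlane := ⟨c, hcT⟩
  have hc : ‖c' - toTargetPlane a‖ ^ 2 + a 2 ^ 2 = ‖c' - toTargetPlane b‖ ^ 2 + b 2 ^ 2 := by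
    rw [← norm_coe_sub_sq, ← norm_coe_sub_sq, hceq]
  rw [norm_sub_rev e, norm_sub_rev a, norm_coe_sub_lt_norm_coe_sub_iff c' e a,
    ← toTargetPlane_mem_segment_iff, ← exists_norm_sub_sq_add_lt_and_lt_iff hc]
  simp only [lt_min_iff, ← norm_coe_sub_lt_norm_coe_sub_iff]
  exact ⟨fun ⟨t, ht, h⟩ => ⟨⟨t, ht⟩, h⟩, fun ⟨t, h⟩ => ⟨t, t.2, h⟩⟩

/-- Theorem 1 (evader winning subspace): for two active pursuers the evader winning
subspace is the complement in the play half-space of the barrier and the pursuer winning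
subspace: the evader wins iff it lies strictly inside the circle of radius `r = ‖a − c‖`
centered at `c = c_{a,b}`, or its horizontal projection is not on the closed segment
joining the pursuers' projections. -/
theorem two_pursuer_evader_winning (a b c e : EuclideanSpace ℝ (Fin 3))
    (hab : (a 0, a 1) ≠ (b 0, b 1))
    (hcT : c 2 = 0)
    (hcline : ∃ u : ℝ, c = projT a + u • (projT b - projT a))
    (hceq : ‖c - a‖ = ‖c - b‖)
    (he : e 2 > 0) (hea : e ≠ a) (heb : e ≠ b) :
    (∃ t : EuclideanSpace ℝ (Fin 3), t 2 = 0 ∧ ‖t - e‖ < min ‖t - a‖ ‖t - b‖) ↔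
    (‖e - c‖ < ‖a - c‖ ∨
      ¬∃ β : ℝ, 0 ≤ β ∧ β ≤ 1 ∧
        e 0 = β * a 0 + (1 - β) * b 0 ∧ e 1 = β * a 1 + (1 - β) * b 1) :=
  two_pursuer_evader_winning_general a b c e hcT hceq
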